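/- Let H be a connected multigraph with at least one edge, let G be a multigraph, and let G* and H⁺ be as defined (G* adds mdeg_G(v) pendant double-edge gadgets to each vertex v of G; H⁺ adds one such gadget to each vertex of H). Then the minimum size of an H-cover of G is at most the minimum size of an H⁺-cover of G*. -/

import Mathlib

open scoped Classical

/-- A finite loopless multigraph: `E` indexes edges, `ends e` gives the endpoints. -/
structure Multigraph (V : Type) (E : Type) where
  ends : E → Sym2 V
  loopless : ∀ e, ¬ (ends e).IsDiag

namespace Multigraph

variable {V E V1 E1 V2 E2 : Type}

/-- Multidegree: number of edges (with multiplicity) incident with `v`. -/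
noncomputable def mdeg (G : Multigraph V E) [Fintype E] (v : V) : ℕ :=
  (Finset.univ.filter (fun e => v ∈ G.ends e)).card

/-- Walks in a multigraph, remembering which edge instance is used at each step. -/
inductive Walk (G : Multigraph V E) : V → V → Type where
  | nil (v : V) : Walk G v v
  | cons {u v w : V} (e : E) (he : G.ends e = s(u, v)) (p : Walk G v w) : Walk G u w

namespace Walk

variable {G : Multigraph V E}

def support : {u v : V} → G.Walk u v → List V
  | u, _, .nil _ => [u]
  | u, _, .cons _ _ p => u :: p.support

def edges : {u v : V} → G.Walk u v → List E
  | _, _, .nil _ => []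
  | _, _, .cons e _ p => e :: p.edges

/-- A walk is a path when its vertices are pairwise distinct. -/
def IsPath {u v : V} (p : G.Walk u v) : Prop := p.support.Nodup

/-- The internal vertices of a walk (all vertices except the two endpoints). -/
def interior {u v : V} (p : G.Walk u v) : List V := p.support.tail.dropLast

end Walk

/-- An `H`-immersion model in `G`. -/
structure ImmersionModel (H : Multigraph V1 E1) (G : Multigraph V E) where
  vmap : V1 → V
  vmap_inj : Function.Injective vmap
  src : E1 → V1
  tgt : E1 → V1
  ends_eq : ∀ e, H.ends e = s(src e, tgt e)
  path : ∀ e, G.Walk (vmap (src e)) (vmap (tgt e))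
  path_isPath : ∀ e, (path e).IsPath
  edge_disjoint : ∀ e₁ e₂, e₁ ≠ e₂ → ∀ x, x ∈ (path e₁).edges → x ∉ (path e₂).edges

namespace ImmersionModel

variable {H : Multigraph V1 E1} {G : Multigraph V E}

/-- The edges of the immersion expansion associated with the model. -/
def edgeSet (m : ImmersionModel H G) : Set E := {x | ∃ e, x ∈ (m.path e).edges}

/-- The vertices of the immersion expansion associated with the model. -/
def vertSet (m : ImmersionModel H G) : Set V :=
  {x | (∃ a, m.vmap a = x) ∨ ∃ e, x ∈ (m.path e).support}

end ImmersionModel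

/-- `G` contains `H` as an immersion. -/
def Immersed (H : Multigraph V1 E1) (G : Multigraph V E) : Prop :=
  Nonempty (ImmersionModel H G)

/-- Deleting a set of edges from a multigraph. -/
def deleteEdges (G : Multigraph V E) (F : Set E) : Multigraph V {e : E // e ∉ F} where
  ends e := G.ends e.1
  loopless e := G.loopless e.1

/-- The minimum size of an `H`-cover of `G`: a set of edges meeting every
`H`-immersion expansion. (By convention `sInf ∅ = 0`.) -/
noncomputable def coverNum (H : Multigraph V1 E1) (G : Multigraph V E) : ℕ :=
  sInf {n | ∃ C : Finset E, ¬ Immersed H (G.deleteEdges ↑C) ∧ C.card = n}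

/-- The maximum size of an `H`-packing in `G`: a collection of pairwise
edge-disjoint `H`-immersion expansions. -/
noncomputable def packNum (H : Multigraph V1 E1) (G : Multigraph V E) : ℕ :=
  sSup {n | ∃ f : Fin n → ImmersionModel H G,
    ∀ i j, i ≠ j → Disjoint (f i).edgeSet (f j).edgeSet}

/-- Connectivity of a multigraph. -/
def Connected (G : Multigraph V E) : Prop :=
  Nonempty V ∧ ∀ u v : V, Nonempty (G.Walk u v)

/-- Reachability in `G` avoiding the vertex set `X`. -/
def ReachAvoid (G : Multigraph V E) (X : Set V) (u v : V) : Prop :=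
  ∃ p : G.Walk u v, ∀ x ∈ p.support, x ∉ X

/-- The underlying simple graph of a multigraph. -/
def toSimple (G : Multigraph V E) : SimpleGraph V where
  Adj u v := u ≠ v ∧ ∃ e, G.ends e = s(u, v)
  symm := by
    constructor
    rintro u v ⟨h, e, he⟩
    exact ⟨h.symm, e, by rw [he, Sym2.eq_swap]⟩
  loopless := ⟨fun v h => h.1 rfl⟩

end Multigraph

section Minor

/-- `A` is a minor of `B` (branch-set/minor-model definition). -/
def SimpleGraphMinorOf {α β : Type} (A : SimpleGraph α) (B : SimpleGraph β) : Prop :=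
  ∃ C : α → Set β,
    (∀ a, (C a).Nonempty) ∧
    (∀ a, (B.induce (C a)).Connected) ∧
    (Pairwise fun a a' => Disjoint (C a) (C a')) ∧
    (∀ a a', A.Adj a a' → ∃ x ∈ C a, ∃ y ∈ C a', B.Adj x y)

end Minor

namespace Multigraph

variable {V E : Type}

/-- Planarity of a loopless multigraph, via Wagner's theorem: no `K₅` and
no `K₃,₃` minor in the underlying simple graph. -/
def Planar (G : Multigraph V E) : Prop :=
  ¬ SimpleGraphMinorOf (SimpleGraph.completeGraph (Fin 5)) G.toSimple ∧
  ¬ SimpleGraphMinorOf (completeBipartiteGraph (Fin 3) (Fin 3)) G.toSimple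

lemma isDiag_map_inl {α β : Type} (p : Sym2 α) :
    (p.map (Sum.inl : α → α ⊕ β)).IsDiag ↔ p.IsDiag := by
  induction p using Sym2.ind with
  | _ a b => simp

/-- `G⁺`: attach to every vertex `v` a gadget of two new vertices `(v,false)`,
`(v,true)` joined by a double edge, each joined to `v` by a single edge. -/
def plus (G : Multigraph V E) :
    Multigraph (V ⊕ (V × Bool)) (E ⊕ ((V × Fin 2) ⊕ (V × Bool))) where
  ends
    | .inl e => (G.ends e).map .inl
    | .inr (.inl (v, _)) => s(.inr (v, false), .inr (v, true))
    | .inr (.inr (v, b)) => s(.inl v, .inr (v, b))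
  loopless := by
    rintro (e | ⟨v, i⟩ | ⟨v, b⟩) h
    · exact G.loopless e ((isDiag_map_inl _).1 h)
    · simp at h
    · simp at h

/-- `G*`: attach, at every vertex `v` and for every `i ∈ {1,…,mdeg v}`, a gadget of two
new vertices joined by a double edge, each joined to `v` by a single edge. -/
noncomputable def star (G : Multigraph V E) [Fintype E] :
    Multigraph (V ⊕ ((Σ v : V, Fin (G.mdeg v)) × Bool))
      (E ⊕ (((Σ v : V, Fin (G.mdeg v)) × Fin 2) ⊕ ((Σ v : V, Fin (G.mdeg v)) × Bool))) where
  ends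
    | .inl e => (G.ends e).map .inl
    | .inr (.inl (p, _)) => s(.inr (p, false), .inr (p, true))
    | .inr (.inr (p, b)) => s(.inl p.1, .inr (p, b))
  loopless := by
    rintro (e | ⟨p, i⟩ | ⟨p, b⟩) h
    · exact G.loopless e ((isDiag_map_inl _).1 h)
    · simp at h
    · simp at h

/-- The subdivision of `G` in which the edge `e` (oriented from `src e` to `tgt e`)
is subdivided `n e` times, i.e. replaced by a path with `n e` internal vertices. -/
def subdivide (G : Multigraph V E) (src tgt : E → V)
    (hst : ∀ e, G.ends e = s(src e, tgt e)) (n : E → ℕ) :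
    Multigraph (V ⊕ (Σ e : E, Fin (n e))) (Σ e : E, Fin (n e + 1)) where
  ends := fun q =>
    s(if _ : q.2.val = 0 then Sum.inl (src q.1)
        else Sum.inr ⟨q.1, ⟨q.2.val - 1, by have := q.2.isLt; omega⟩⟩,
      if _ : q.2.val = n q.1 then Sum.inl (tgt q.1)
        else Sum.inr ⟨q.1, ⟨q.2.val, by have := q.2.isLt; omega⟩⟩)
  loopless := by
    rintro ⟨e, i⟩ h
    rw [Sym2.mk_isDiag_iff] at h
    split_ifs at h with h1 h2 h2 <;>
      first
        | exact Sum.noConfusion h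
        | (have hl := G.loopless e
           rw [hst e, Sym2.mk_isDiag_iff] at hl
           exact hl (Sum.inl.inj h))
        | (have h3 := Sum.inr.inj h
           simp at h1 h3
           have h4 : i.val ≠ 0 := fun h0 => h1 (Fin.ext h0)
           omega)

end Multigraph

namespace Multigraph

/-- The multigraph underlying a simple graph. -/
def ofSimple {α : Type} (S : SimpleGraph α) : Multigraph α S.edgeSet where
  ends e := e.1
  loopless e := S.not_isDiag_of_mem_edgeSet e.2

/-- A strong immersion model: additionally, no branch vertex is an internal
vertex of a certifying path. -/
structure StrongImmersionModel {V1 E1 V E : Type} (H : Multigraph V1 E1) (G : Multigraph V E)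
    extends ImmersionModel H G where
  not_internal : ∀ (e : E1) (x : V1), vmap x ∉ (path e).interior

/-- An `H`-topological-minor model in `G`: certifying paths are internally
vertex-disjoint and their internal vertices avoid the branch vertices. -/
structure TopMinorModel {V1 E1 V E : Type} (H : Multigraph V1 E1) (G : Multigraph V E) where
  vmap : V1 → V
  vmap_inj : Function.Injective vmap
  src : E1 → V1
  tgt : E1 → V1
  ends_eq : ∀ e, H.ends e = s(src e, tgt e)
  path : ∀ e, G.Walk (vmap (src e)) (vmap (tgt e))
  path_isPath : ∀ e, (path e).IsPath
  internal_disjoint : ∀ e₁ e₂, e₁ ≠ e₂ → ∀ x, x ∈ (path e₁).interior → x ∉ (path e₂).support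
  internal_avoid : ∀ (e : E1) (x : V1), vmap x ∉ (path e).interior

end Multigraph

section Walls

/-- The `m × n` grid graph. -/
def gridGraph (m n : ℕ) : SimpleGraph (Fin m × Fin n) where
  Adj p q := (p.1 = q.1 ∧ (p.2.val + 1 = q.2.val ∨ q.2.val + 1 = p.2.val)) ∨
             (p.2 = q.2 ∧ (p.1.val + 1 = q.1.val ∨ q.1.val + 1 = p.1.val))
  symm := by constructor; rintro p q (⟨h, h'⟩ | ⟨h, h'⟩) <;> [left; right] <;> exact ⟨h.symm, h'.symm⟩
  loopless := by constructor; rintro p (⟨-, h | h⟩ | ⟨-, h | h⟩) <;> omega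

/-- The `k×k` grid `Γ_k` as a multigraph. -/
def Gamma (k : ℕ) : Multigraph (Fin k × Fin k) (gridGraph k k).edgeSet :=
  Multigraph.ofSimple (gridGraph k k)

/-- The `(k+1) × (2k+2)` grid with the vertical edges `{(x,y),(x+1,y)}` with `x+y` odd
(in 1-indexed coordinates) removed. -/
def wallPre (k : ℕ) : SimpleGraph (Fin (k + 1) × Fin (2 * k + 2)) where
  Adj p q := (gridGraph (k + 1) (2 * k + 2)).Adj p q ∧
    ¬ (p.2 = q.2 ∧ (min p.1.val q.1.val + p.2.val) % 2 = 1)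
  symm := by
    constructor
    rintro p q ⟨h, h'⟩
    refine ⟨(gridGraph _ _).adj_symm h, fun ⟨hc, hp⟩ => h' ⟨hc.symm, ?_⟩⟩
    rw [Nat.min_comm] at hp
    rw [← hc]
    exact hp
  loopless := ⟨fun p h => (gridGraph _ _).loopless.irrefl p h.1⟩

/-- Degree of a vertex in `wallPre k`. -/
noncomputable def wallPreDeg (k : ℕ) (v : Fin (k + 1) × Fin (2 * k + 2)) : ℕ :=
  (Finset.univ.filter (fun w => (wallPre k).Adj v w)).card

/-- The vertex set of the `k`-wall: vertices of degree `≠ 1`. -/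
def wallVerts (k : ℕ) : Set (Fin (k + 1) × Fin (2 * k + 2)) :=
  {v | wallPreDeg k v ≠ 1}

/-- The `k`-wall `W_k`, as a simple graph. -/
noncomputable def wallSimple (k : ℕ) : SimpleGraph (wallVerts k) :=
  (wallPre k).induce (wallVerts k)

/-- The `k`-wall `W_k`, as a multigraph. -/
noncomputable def Wall (k : ℕ) : Multigraph (wallVerts k) (wallSimple k).edgeSet :=
  Multigraph.ofSimple (wallSimple k)

/-- The doubled edges of `W⁺_k`: the horizontal edges lying on both a vertical and a
horizontal path of the wall, i.e. those whose lower column index is odd (1-indexed). -/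
def isDoubledEdge (k : ℕ) (p : Sym2 (wallVerts k)) : Prop :=
  ∃ a b : wallVerts k, p = s(a, b) ∧ (a : Fin (k + 1) × Fin (2 * k + 2)).1 = (b : Fin (k + 1) × Fin (2 * k + 2)).1 ∧
    (b : Fin (k + 1) × Fin (2 * k + 2)).2.val = (a : Fin (k + 1) × Fin (2 * k + 2)).2.val + 1 ∧
    (a : Fin (k + 1) × Fin (2 * k + 2)).2.val % 2 = 0

/-- `W⁺_k`: the `k`-wall with a second parallel copy of every doubled edge. -/
noncomputable def WallPlus (k : ℕ) :
    Multigraph (wallVerts k)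
      ((wallSimple k).edgeSet ⊕ {p : Sym2 (wallVerts k) // p ∈ (wallSimple k).edgeSet ∧ isDoubledEdge k p}) where
  ends
    | .inl e => e.1
    | .inr e => e.1
  loopless := by
    rintro (e | e)
    · exact (wallSimple k).not_isDiag_of_mem_edgeSet e.2
    · exact (wallSimple k).not_isDiag_of_mem_edgeSet e.2.1

end Walls

namespace Multigraph

variable {V E : Type}

/-- Tree-partition width of a multigraph (bags may be empty; w.l.o.g. bags are
indexed by the vertices themselves). -/
noncomputable def tpw (G : Multigraph V E) [Fintype V] [Fintype E] : ℕ :=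
  sInf {w | ∃ T : SimpleGraph V, T.IsTree ∧ ∃ bag : V → V,
    (Fintype.card V = 1 ∨
      ∀ (e : E) (a b : V), G.ends e = s(a, b) → bag a = bag b ∨ T.Adj (bag a) (bag b)) ∧
    (∀ t : V, (Finset.univ.filter (fun v => bag v = t)).card ≤ w) ∧
    (∀ t t' : V, T.Adj t t' →
      (Finset.univ.filter (fun e : E =>
        ∃ a b, G.ends e = s(a, b) ∧ bag a = t ∧ bag b = t')).card ≤ w)}

section ThreeCenter

variable {W : Type} [Fintype W]

/-- Degree of `v` in the state `(A, m)`: `A` is the set of remaining vertices and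
`m` gives edge multiplicities. -/
noncomputable def stDeg (A : Finset W) (m : Sym2 W → ℕ) (v : W) : ℕ :=
  ∑ w ∈ A.erase v, m s(v, w)

/-- One reduction step of the 3-center construction relative to the marked set `X`:
delete a vertex of degree one, or suppress (dissolve) a vertex of degree two not in `X`. -/
inductive CStep (X : Set W) :
    Finset W × (Sym2 W → ℕ) → Finset W × (Sym2 W → ℕ) → Prop
  | delete (A : Finset W) (m : Sym2 W → ℕ) (v : W) (hv : v ∈ A) (hd : stDeg A m v = 1) :
      CStep X (A, m) (A.erase v, fun p => if v ∈ p then 0 else m p)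
  | suppress (A : Finset W) (m : Sym2 W → ℕ) (v a b : W) (hv : v ∈ A) (hx : v ∉ X)
      (ha : a ∈ A) (hb : b ∈ A) (hav : a ≠ v) (hbv : b ≠ v) (hd : stDeg A m v = 2)
      (h1 : 1 ≤ m s(v, a)) (h2 : a = b → m s(v, a) = 2) (h3 : a ≠ b → 1 ≤ m s(v, b)) :
      CStep X (A, m) (A.erase v,
        fun p => if v ∈ p then 0 else if a ≠ b ∧ p = s(a, b) then m p + 1 else m p)

/-- The number of vertices of the 3-center of the marked multigraph given by the
state `(A, m)` with marked set `X`: the size of a reduct on which no step applies. -/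
noncomputable def centerSize (X : Set W) (A : Finset W) (m : Sym2 W → ℕ) : ℕ :=
  sInf {c | ∃ s : Finset W × (Sym2 W → ℕ),
    Relation.ReflTransGen (CStep X) (A, m) s ∧ (∀ s', ¬ CStep X s s') ∧ s.1.card = c}

end ThreeCenter

section TCW

variable {n : ℕ}

/-- The consolidation map for the torso at node `t` of a tree-cut decomposition:
a vertex whose bag is `t` is kept, and any other vertex is sent to the peripheral
vertex indexed by the neighbour `u` of `t` whose branch contains its bag. -/
noncomputable def consMap (T : SimpleGraph (Fin n)) (bag : V → Fin n) (t : Fin n) (a : V) :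
    V ⊕ Fin n :=
  if bag a = t then Sum.inl a
  else if h : ∃ u, T.Adj t u ∧ (T.deleteEdges {s(t, u)}).Reachable (bag a) u
    then Sum.inr h.choose else Sum.inl a

/-- The vertex set of the torso at `t`: the bag of `t` together with one peripheral
vertex for each neighbour of `t` in the decomposition tree. -/
noncomputable def torsoA [Fintype V] (T : SimpleGraph (Fin n)) (bag : V → Fin n) (t : Fin n) :
    Finset (V ⊕ Fin n) :=
  (Finset.univ.filter (fun a : V => bag a = t)).image Sum.inl ∪
    (Finset.univ.filter (fun u : Fin n => T.Adj t u)).image Sum.inr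

/-- The edge multiplicities of the torso at `t`. -/
noncomputable def torsoM (G : Multigraph V E) [Fintype E] (T : SimpleGraph (Fin n))
    (bag : V → Fin n) (t : Fin n) : Sym2 (V ⊕ Fin n) → ℕ :=
  fun p => if p.IsDiag then 0
    else (Finset.univ.filter (fun e : E => (G.ends e).map (consMap T bag t) = p)).card

/-- The adhesion of the tree edge `{t, t'}`: the number of edges of `G` whose endpoints
lie in bags on different sides of the edge. -/
noncomputable def adhE (G : Multigraph V E) [Fintype E] (T : SimpleGraph (Fin n))
    (bag : V → Fin n) (t t' : Fin n) : ℕ :=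
  (Finset.univ.filter (fun e : E => ∃ a b, G.ends e = s(a, b) ∧
    (T.deleteEdges {s(t, t')}).Reachable (bag a) t ∧
    (T.deleteEdges {s(t, t')}).Reachable (bag b) t')).card

/-- Tree-cut width of a multigraph: the minimum, over tree-cut decompositions, of
the maximum of all adhesions and of the numbers of vertices of the 3-centers
of the torsos. -/
noncomputable def tcw (G : Multigraph V E) [Fintype V] [Fintype E] : ℕ :=
  sInf {w | ∃ (n : ℕ) (T : SimpleGraph (Fin n)), T.IsTree ∧ ∃ bag : V → Fin n,
    (∀ t t', T.Adj t t' → adhE G T bag t t' ≤ w) ∧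
    (∀ t, centerSize (Sum.inl '' {a | bag a = t}) (torsoA T bag t) (torsoM G T bag t) ≤ w)}

end TCW

end Multigraph


/-! Enumerating the edges at each vertex `v` of `G` by `Fin (mdeg v)` matches the `mdeg v`
gadgets of `G*` at `v` with the edges of `G` at `v`. The map `π = starEdgeProj`, which fixes
the edges of `G` and sends a gadget edge to the edge of `G` matched with its gadget, turns a
minimum `H⁺`-cover `X` of `G*` into an edge set `π(X)` of `G` with at most `|X|` elements.
It is an `H`-cover: since `H` is connected and has an edge, every branch vertex of an
`H`-immersion in `G - π(X)` is incident to an edge `f ∉ π(X)`, so the gadget matched with `f`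
avoids `X`; attaching these gadgets to the immersion gives an `H⁺`-immersion in `G* - X`. -/

namespace Multigraph

variable {V E V1 E1 V' E' : Type}

namespace Walk

variable {G : Multigraph V E} {G' : Multigraph V' E'}

lemma exists_mem_edges_left {u w : V} (p : G.Walk u w) (h : u ≠ w) :
    ∃ f ∈ p.edges, u ∈ G.ends f := by
  cases p with
  | nil => exact absurd rfl h
  | cons e he q => exact ⟨e, List.mem_cons_self .., by rw [he]; exact Sym2.mem_mk_left _ _⟩

lemma exists_mem_edges_right {u w : V} (p : G.Walk u w) (h : u ≠ w) :
    ∃ f ∈ p.edges, w ∈ G.ends f := by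
  induction p with
  | nil => exact absurd rfl h
  | @cons u v w e he q ih =>
    by_cases hvw : v = w
    · subst hvw
      exact ⟨e, List.mem_cons_self .., by rw [he]; exact Sym2.mem_mk_right _ _⟩
    · obtain ⟨f, hf, hwf⟩ := ih hvw
      exact ⟨f, List.mem_cons_of_mem _ hf, hwf⟩

def map (φ : V → V') (ψ : E → E') (hψ : ∀ e, G'.ends (ψ e) = (G.ends e).map φ) :
    {u w : V} → G.Walk u w → G'.Walk (φ u) (φ w)
  | _, _, .nil v => .nil (φ v)
  | _, _, .cons e he p => .cons (ψ e) (by rw [hψ, he, Sym2.map_mk]) (p.map φ ψ hψ)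

variable (φ : V → V') (ψ : E → E') (hψ : ∀ e, G'.ends (ψ e) = (G.ends e).map φ)

@[simp]
lemma support_map {u w : V} (p : G.Walk u w) :
    (p.map φ ψ hψ).support = p.support.map φ := by
  induction p with
  | nil => rfl
  | cons e he p ih => simp only [map, support, ih, List.map_cons]

@[simp]
lemma edges_map {u w : V} (p : G.Walk u w) : (p.map φ ψ hψ).edges = p.edges.map ψ := by
  induction p with
  | nil => rfl
  | cons e he p ih => simp only [map, edges, ih, List.map_cons]

lemma IsPath.map (hφ : Function.Injective φ) {u w : V} {p : G.Walk u w} (hp : p.IsPath) :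
    (p.map φ ψ hψ).IsPath := by
  simpa only [Walk.IsPath, support_map] using List.Nodup.map hφ hp

lemma isPath_single {u w : V} (e : E) (he : G.ends e = s(u, w)) (h : u ≠ w) :
    (Walk.cons e he (.nil w)).IsPath := by
  simp [IsPath, support, h]

end Walk

lemma Connected.exists_mem_ends {H : Multigraph V1 E1} (hc : H.Connected) (he : Nonempty E1)
    (x : V1) : ∃ e, x ∈ H.ends e := by
  obtain ⟨e₀⟩ := he
  obtain ⟨p⟩ := hc.2 x (H.ends e₀).out.1
  cases p with
  | nil => exact ⟨e₀, Sym2.out_fst_mem _⟩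
  | cons e he _ => exact ⟨e, by rw [he]; exact Sym2.mem_mk_left _ _⟩

namespace ImmersionModel

variable {H : Multigraph V1 E1} {G : Multigraph V E}

lemma vmap_src_ne_vmap_tgt (m : ImmersionModel H G) (e : E1) :
    m.vmap (m.src e) ≠ m.vmap (m.tgt e) := by
  refine m.vmap_inj.ne fun h => H.loopless e ?_
  rw [m.ends_eq e, h]
  exact Sym2.mk_isDiag_iff.2 rfl

lemma exists_vmap_mem_ends (hc : H.Connected) (he : Nonempty E1) (m : ImmersionModel H G)
    (x : V1) : ∃ f, m.vmap x ∈ G.ends f := by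
  obtain ⟨e, hxe⟩ := hc.exists_mem_ends he x
  rw [m.ends_eq e] at hxe
  rcases Sym2.mem_iff.1 hxe with rfl | rfl
  · obtain ⟨f, -, hxf⟩ := (m.path e).exists_mem_edges_left (m.vmap_src_ne_vmap_tgt e)
    exact ⟨f, hxf⟩
  · obtain ⟨f, -, hxf⟩ := (m.path e).exists_mem_edges_right (m.vmap_src_ne_vmap_tgt e)
    exact ⟨f, hxf⟩

end ImmersionModel

lemma not_immersed_deleteEdges_univ (H : Multigraph V1 E1) (G : Multigraph V E)
    (he : Nonempty E1) : ¬ Immersed H (G.deleteEdges Set.univ) := by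
  rintro ⟨m⟩
  obtain ⟨e⟩ := he
  obtain ⟨f, -, -⟩ := (m.path e).exists_mem_edges_left (m.vmap_src_ne_vmap_tgt e)
  exact f.2 trivial

lemma exists_finset_cover_card_eq_coverNum [Finite E] (H : Multigraph V1 E1)
    (G : Multigraph V E) (he : Nonempty E1) :
    ∃ C : Finset E, ¬ Immersed H (G.deleteEdges C) ∧ C.card = coverNum H G := by
  have : Fintype E := Fintype.ofFinite E
  have hne : {n | ∃ C : Finset E, ¬ Immersed H (G.deleteEdges C) ∧ C.card = n}.Nonempty :=
    ⟨_, Finset.univ, by rw [Finset.coe_univ]; exact not_immersed_deleteEdges_univ H G he, rfl⟩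
  exact Nat.sInf_mem hne

section Star

variable (G : Multigraph V E) [Fintype E]

abbrev StarIndex : Type := Σ v : V, Fin (G.mdeg v)

abbrev StarEdge : Type := E ⊕ ((G.StarIndex × Fin 2) ⊕ (G.StarIndex × Bool))

noncomputable def incidentEdge (q : G.StarIndex) : E :=
  (Finset.univ.filter fun e => q.1 ∈ G.ends e).equivFin.symm q.2

lemma mem_ends_incidentEdge (q : G.StarIndex) : q.1 ∈ G.ends (G.incidentEdge q) :=
  (Finset.mem_filter.1 ((Finset.univ.filter fun e => q.1 ∈ G.ends e).equivFin.symm q.2).2).2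

lemma exists_incidentEdge_eq {v : V} {e : E} (h : v ∈ G.ends e) :
    ∃ i, G.incidentEdge ⟨v, i⟩ = e :=
  ⟨(Finset.univ.filter fun e => v ∈ G.ends e).equivFin ⟨e, by simpa using h⟩,
    by simp [incidentEdge]⟩

lemma incidentEdge_injective {v : V} : Function.Injective fun i => G.incidentEdge ⟨v, i⟩ :=
  fun _ _ h => (Finset.equivFin _).symm.injective (Subtype.ext h)

instance : Finite G.StarIndex := by
  refine Finite.of_injective (β := Σ e : E, (G.ends e).toFinset)
    (fun q => ⟨G.incidentEdge q, q.1, Sym2.mem_toFinset.2 (G.mem_ends_incidentEdge q)⟩) ?_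
  rintro ⟨v, i⟩ ⟨w, j⟩ h
  obtain rfl : v = w := congrArg (fun p => (p.2 : V)) h
  rw [G.incidentEdge_injective (congrArg Sigma.fst h)]

noncomputable def starEdgeProj : G.StarEdge → E
  | .inl e => e
  | .inr (.inl (q, _)) => G.incidentEdge q
  | .inr (.inr (q, _)) => G.incidentEdge q

variable {G} {H : Multigraph V1 E1} {X : Set G.StarEdge}

def starEdgeOfEdge (X : Set G.StarEdge) (f : {e // e ∉ G.starEdgeProj '' X}) :
    {x : G.StarEdge // x ∉ X} :=
  ⟨.inl f.1, fun hf => f.2 ⟨_, hf, rfl⟩⟩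

lemma starEdgeOfEdge_injective (X : Set G.StarEdge) : Function.Injective (starEdgeOfEdge X) :=
  fun _ _ h => Subtype.ext (Sum.inl_injective (congrArg Subtype.val h))

namespace ImmersionModel

variable (m : ImmersionModel H (G.deleteEdges (G.starEdgeProj '' X)))
  (i : ∀ x, Fin (G.mdeg (m.vmap x)))

def starGadget (x : V1) : G.StarIndex := ⟨m.vmap x, i x⟩

lemma starGadget_injective : Function.Injective (m.starGadget i) :=
  fun _ _ h => m.vmap_inj (congrArg Sigma.fst h)

def starGadgetEdge :
    (V1 × Fin 2) ⊕ (V1 × Bool) → (G.StarIndex × Fin 2) ⊕ (G.StarIndex × Bool) :=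
  Sum.map (Prod.map (m.starGadget i) id) (Prod.map (m.starGadget i) id)

lemma starGadgetEdge_injective : Function.Injective (m.starGadgetEdge i) :=
  Function.Injective.sumMap ((m.starGadget_injective i).prodMap Function.injective_id)
    ((m.starGadget_injective i).prodMap Function.injective_id)

noncomputable def liftToStar
    (hi : ∀ x, G.incidentEdge (m.starGadget i x) ∉ G.starEdgeProj '' X) :
    ImmersionModel H.plus (G.star.deleteEdges X) where
  vmap := Sum.elim (fun x => .inl (m.vmap x)) (fun xb => .inr (m.starGadget i xb.1, xb.2))
  vmap_inj := by
    refine Function.Injective.sumElim (Sum.inl_injective.comp m.vmap_inj)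
      (Sum.inr_injective.comp ((m.starGadget_injective i).prodMap Function.injective_id)) ?_
    simp
  src
    | .inl e => .inl (m.src e)
    | .inr (.inl (x, _)) => .inr (x, false)
    | .inr (.inr (x, _)) => .inl x
  tgt
    | .inl e => .inl (m.tgt e)
    | .inr (.inl (x, _)) => .inr (x, true)
    | .inr (.inr (x, b)) => .inr (x, b)
  ends_eq
    | .inl e => by
      show (H.ends e).map _ = _
      rw [m.ends_eq e, Sym2.map_mk]
    | .inr (.inl _) => rfl
    | .inr (.inr _) => rfl
  path
    | .inl e => (m.path e).map Sum.inl (starEdgeOfEdge X) fun _ => rfl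
    | .inr s => .cons ⟨.inr (m.starGadgetEdge i s), by
        rcases s with ⟨x, j⟩ | ⟨x, b⟩ <;> exact fun h => hi x ⟨_, h, rfl⟩⟩
        (by rcases s with ⟨x, j⟩ | ⟨x, b⟩ <;> rfl) (.nil _)
  path_isPath
    | .inl e => (m.path_isPath e).map _ _ _ Sum.inl_injective
    | .inr (.inl _) => Walk.isPath_single _ _ (by simp)
    | .inr (.inr _) => Walk.isPath_single _ _ (by simp)
  edge_disjoint := by
    -- The endpoints of the lifted walks agree with those in `Walk.edges_map` only up to
    -- unfolding `vmap`, `src` and `tgt`, hence `erw`.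
    rintro (e₁ | s₁) (e₂ | s₂) hne x hx₁ hx₂
    · erw [Walk.edges_map, List.mem_map] at hx₁ hx₂
      obtain ⟨f₁, hf₁, rfl⟩ := hx₁
      obtain ⟨f₂, hf₂, hf⟩ := hx₂
      obtain rfl := starEdgeOfEdge_injective X hf
      exact m.edge_disjoint e₁ e₂ (fun h => hne (congrArg _ h)) f₂ hf₁ hf₂
    · erw [Walk.edges_map, List.mem_map] at hx₁
      obtain ⟨f, -, rfl⟩ := hx₁
      simp [Walk.edges, starEdgeOfEdge] at hx₂
    · erw [Walk.edges_map, List.mem_map] at hx₂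
      obtain ⟨f, -, rfl⟩ := hx₂
      simp [Walk.edges, starEdgeOfEdge] at hx₁
    · simp only [Walk.edges, List.mem_singleton] at hx₁ hx₂
      subst hx₁
      exact hne (congrArg _ (m.starGadgetEdge_injective i
        (Sum.inr_injective (congrArg Subtype.val hx₂))))

end ImmersionModel

lemma Immersed.plus_star (hc : H.Connected) (he : Nonempty E1)
    (h : Immersed H (G.deleteEdges (G.starEdgeProj '' X))) :
    Immersed H.plus (G.star.deleteEdges X) := by
  obtain ⟨m⟩ := h
  have untouched : ∀ x, ∃ i, G.incidentEdge ⟨m.vmap x, i⟩ ∉ G.starEdgeProj '' X := by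
    intro x
    obtain ⟨f, hxf⟩ := m.exists_vmap_mem_ends hc he x
    obtain ⟨i, hi⟩ := G.exists_incidentEdge_eq hxf
    exact ⟨i, hi ▸ f.2⟩
  choose i hi using untouched
  exact ⟨m.liftToStar i hi⟩

end Star

end Multigraph

/-- `cover_H(G) ≤ cover_{H⁺}(G*)` for connected `H` with at least one edge. -/
theorem coverNum_le_coverNum_plus_star {V1 E1 V E : Type} [Fintype E]
    (H : Multigraph V1 E1) (G : Multigraph V E)
    (hc : H.Connected) (he : Nonempty E1) :
    Multigraph.coverNum H G ≤ Multigraph.coverNum H.plus G.star := by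
  obtain ⟨X, hX, hXcard⟩ :=
    Multigraph.exists_finset_cover_card_eq_coverNum H.plus G.star ⟨Sum.inl he.some⟩
  have hcover : ¬ Multigraph.Immersed H (G.deleteEdges ↑(X.image G.starEdgeProj)) := by
    rw [Finset.coe_image]
    exact fun h => hX (h.plus_star hc he)
  calc Multigraph.coverNum H G ≤ (X.image G.starEdgeProj).card := Nat.sInf_le ⟨_, hcover, rfl⟩
    _ ≤ X.card := Finset.card_image_le
    _ = Multigraph.coverNum H.plus G.star := hXcard
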